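/- The energy Hilbert space decomposes orthogonally as H_E = Fin ⊕ Harm: every finite-energy function is uniquely (mod constants) the sum of an element of the closure of the finitely supported functions and a finite-energy harmonic function, and these subspaces are orthogonal with respect to the energy inner product. -/

import Mathlib

/-- Membership in the domain of the energy form: `u` has finite energy. -/
def FiniteEnergy {V : Type*} (c : V → V → ℝ) (u : V → ℝ) : Prop :=
  Summable (fun p : V × V => c p.1 p.2 * (u p.1 - u p.2) ^ 2)

/-- The energy bilinear form `⟨u,v⟩_E = (1/2) Σ_{s,t} c_{st}(u s - u t)(v s - v t)`. -/
noncomputable def einner {V : Type*} (c : V → V → ℝ) (u v : V → ℝ) : ℝ :=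
  (1 / 2) * ∑' p : V × V, c p.1 p.2 * (u p.1 - u p.2) * (v p.1 - v p.2)

/-- `f` lies in `Fin`, the energy-closure of the finitely supported functions. -/
def MemFinClosure {V : Type*} (c : V → V → ℝ) (f : V → ℝ) : Prop :=
  FiniteEnergy c f ∧ ∀ ε : ℝ, 0 < ε → ∃ g : V → ℝ, (Function.support g).Finite ∧
    einner c (fun z => f z - g z) (fun z => f z - g z) < ε

/-- `h` is harmonic: `Δh(x) = Σ_y c_{xy}(h x - h y) = 0` at every vertex. -/
def Harmonic {V : Type*} (c : V → V → ℝ) (h : V → ℝ) : Prop :=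
  ∀ x, Summable (fun y => c x y * (h x - h y)) ∧ ∑' y : V, c x y * (h x - h y) = 0

/-!
The gradient `u ↦ (√(c x y / 2) * (u x - u y))_{(x,y)}` is an isometry from the energy space into
`ℓ²(V × V)`. Along a path of positive conductances, `|u a - u b|` is bounded by a constant times
the energy norm, so on a connected network the image of the gradient is closed: the energy space
is complete. Let `K` be the closure of the gradients of finitely supported functions; its elements
are exactly the gradients of `Fin`. Since `⟨δₓ, u⟩_E = Δu(x)`, the gradients orthogonal to `K` are
exactly those of `Harm`. Projecting onto `K` in `ℓ²` gives the decomposition, and `K ⊓ Kᗮ = ⊥`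
gives uniqueness, because a function with zero gradient is constant on a connected network.
-/

open scoped InnerProductSpace Topology

open Filter

namespace ResistanceNetwork

variable {V : Type*} {c : V → V → ℝ} {u v w f g h : V → ℝ}

abbrev EdgeL2 (V : Type*) := lp (fun _ : V × V => ℝ) 2

noncomputable def energyGrad (c : V → V → ℝ) : (V → ℝ) →ₗ[ℝ] V × V → ℝ where
  toFun u p := √(c p.1 p.2 / 2) * (u p.1 - u p.2)
  map_add' u v := by ext p; simp only [Pi.add_apply]; ring
  map_smul' a u := by ext p; simp only [Pi.smul_apply, smul_eq_mul, RingHom.id_apply]; ring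

lemma energyGrad_apply (u : V → ℝ) (p : V × V) :
    energyGrad c u p = √(c p.1 p.2 / 2) * (u p.1 - u p.2) := rfl

lemma energyGrad_mul_energyGrad (hc : ∀ x y, 0 ≤ c x y) (u v : V → ℝ) (p : V × V) :
    energyGrad c u p * energyGrad c v p = c p.1 p.2 * (u p.1 - u p.2) * (v p.1 - v p.2) / 2 := by
  have := Real.mul_self_sqrt (div_nonneg (hc p.1 p.2) zero_le_two)
  rw [energyGrad_apply, energyGrad_apply]
  linear_combination (u p.1 - u p.2) * (v p.1 - v p.2) * this

lemma finiteEnergy_iff_memℓp (hc : ∀ x y, 0 ≤ c x y) :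
    FiniteEnergy c u ↔ Memℓp (energyGrad c u) 2 := by
  rw [memℓp_gen_iff (by norm_num), FiniteEnergy, ← summable_div_const_iff two_ne_zero]
  refine summable_congr fun p => ?_
  rw [ENNReal.toReal_ofNat, Real.rpow_two, Real.norm_eq_abs, sq_abs, sq (energyGrad c u p),
    energyGrad_mul_energyGrad hc]
  ring

lemma einner_eq_tsum (hc : ∀ x y, 0 ≤ c x y) (u v : V → ℝ) :
    einner c u v = ∑' p, energyGrad c u p * energyGrad c v p := by
  simp_rw [einner, energyGrad_mul_energyGrad hc, div_eq_inv_mul, tsum_mul_left]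
  ring

lemma exists_coe_eq_energyGrad (hc : ∀ x y, 0 ≤ c x y) (hu : FiniteEnergy c u) :
    ∃ U : EdgeL2 V, ⇑U = energyGrad c u :=
  ⟨⟨_, (finiteEnergy_iff_memℓp hc).1 hu⟩, rfl⟩

lemma finiteEnergy_of_coe_eq (hc : ∀ x y, 0 ≤ c x y) {U : EdgeL2 V}
    (hU : ⇑U = energyGrad c u) : FiniteEnergy c u :=
  (finiteEnergy_iff_memℓp hc).2 (hU ▸ U.2)

lemma einner_eq_inner (hc : ∀ x y, 0 ≤ c x y) {U W : EdgeL2 V}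
    (hU : ⇑U = energyGrad c u) (hW : ⇑W = energyGrad c w) : einner c u w = ⟪U, W⟫_ℝ := by
  simp_rw [einner_eq_tsum hc, lp.inner_eq_tsum, Real.inner_apply, ← hU, ← hW]

lemma einner_self_eq_norm_sq (hc : ∀ x y, 0 ≤ c x y) {U : EdgeL2 V}
    (hU : ⇑U = energyGrad c u) : einner c u u = ‖U‖ ^ 2 := by
  rw [einner_eq_inner hc hU hU, real_inner_self_eq_norm_sq]

lemma einner_smul_left (a : ℝ) (u w : V → ℝ) : einner c (a • u) w = a * einner c u w := by
  simp_rw [einner, Pi.smul_apply, smul_eq_mul, ← mul_sub, mul_assoc, mul_left_comm _ a,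
    tsum_mul_left]
  ring

lemma einner_add_left (hc : ∀ x y, 0 ≤ c x y) (hu : FiniteEnergy c u) (hv : FiniteEnergy c v)
    (hw : FiniteEnergy c w) : einner c (u + v) w = einner c u w + einner c v w := by
  obtain ⟨U, hU⟩ := exists_coe_eq_energyGrad hc hu
  obtain ⟨V', hV⟩ := exists_coe_eq_energyGrad hc hv
  obtain ⟨W, hW⟩ := exists_coe_eq_energyGrad hc hw
  have hUV : ⇑(U + V') = energyGrad c (u + v) := by rw [lp.coeFn_add, hU, hV, map_add]
  rw [einner_eq_inner hc hUV hW, einner_eq_inner hc hU hW, einner_eq_inner hc hV hW,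
    inner_add_left]

section Laplacian

variable [DecidableEq V]

lemma hasSum_single_fst_mul (x : V) {G : V × V → ℝ} {a : ℝ} (h : HasSum (fun y => G (x, y)) a) :
    HasSum (fun p => (Pi.single x 1 : V → ℝ) p.1 * G p) a := by
  refine ((Prod.mk_right_injective x).hasSum_iff ?_).1 (by simpa [Function.comp_def] using h)
  rintro ⟨s, t⟩ hp
  have hs : s ≠ x := by rintro rfl; exact hp ⟨t, rfl⟩
  simp [hs]

lemma hasSum_single_snd_mul (x : V) {G : V × V → ℝ} {a : ℝ} (h : HasSum (fun y => G (y, x)) a) :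
    HasSum (fun p => (Pi.single x 1 : V → ℝ) p.2 * G p) a := by
  refine ((Prod.mk_left_injective x).hasSum_iff ?_).1 (by simpa [Function.comp_def] using h)
  rintro ⟨s, t⟩ hp
  have ht : t ≠ x := by rintro rfl; exact hp ⟨s, rfl⟩
  simp [ht]

/-- The summand splits into the row `p.1 = x` and the column `p.2 = x`; by symmetry of `c`
both sum to `Δv(x)`. -/
lemma hasSum_energy_single_left (hsymm : ∀ x y, c x y = c y x) {x : V} {a : ℝ}
    (hlap : HasSum (fun y => c x y * (v x - v y)) a) :
    HasSum (fun p : V × V =>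
      c p.1 p.2 * ((Pi.single x 1 : V → ℝ) p.1 - (Pi.single x 1 : V → ℝ) p.2) * (v p.1 - v p.2))
      (2 * a) := by
  have h₁ := hasSum_single_fst_mul x (G := fun p => c p.1 p.2 * (v p.1 - v p.2)) hlap
  have h₂ := hasSum_single_snd_mul x (G := fun p => c p.1 p.2 * (v p.2 - v p.1))
    (by simpa only [hsymm _ x] using hlap)
  convert h₁.add h₂ using 1
  · ext p; ring
  · ring

lemma einner_single_left (hsymm : ∀ x y, c x y = c y x) {x : V} {a : ℝ}
    (hlap : HasSum (fun y => c x y * (v x - v y)) a) :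
    einner c (Pi.single x 1 : V → ℝ) v = a := by
  rw [einner, (hasSum_energy_single_left hsymm hlap).tsum_eq]
  ring

lemma finiteEnergy_single (hsymm : ∀ x y, c x y = c y x) (hdeg : ∀ x, Summable (c x)) (x : V) :
    FiniteEnergy c (Pi.single x 1 : V → ℝ) := by
  have hlap :
      Summable fun y => c x y * ((Pi.single x 1 : V → ℝ) x - (Pi.single x 1 : V → ℝ) y) := by
    refine ((hdeg x).sub (hasSum_pi_single x (c x x)).summable).congr fun y => ?_
    rcases eq_or_ne y x with rfl | hy <;> simp [*]
  exact (hasSum_energy_single_left hsymm hlap.hasSum).summable.congr fun p => by ring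

theorem induction_on_finite_support {M : Type*} [AddZeroClass M] {motive : (V → M) → Prop}
    (zero : motive 0)
    (add : ∀ f g : V → M, (Function.support f).Finite → (Function.support g).Finite →
      motive f → motive g → motive (f + g))
    (single : ∀ x a, motive (Pi.single x a)) {g : V → M} (hg : (Function.support g).Finite) :
    motive g := by
  suffices ∀ F : V →₀ M, motive F from this (Finsupp.ofSupportFinite g hg)
  intro F
  induction F using Finsupp.induction_linear with
  | zero => exact zero
  | add F G hF hG => exact add F G F.hasFiniteSupport G.hasFiniteSupport hF hG
  | single x a => rw [Finsupp.single_eq_pi_single]; exact single x a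

end Laplacian

lemma summable_laplacian (hc : ∀ x y, 0 ≤ c x y) (hdeg : ∀ x, Summable (c x))
    (hv : FiniteEnergy c v) (x : V) : Summable fun y => c x y * (v x - v y) := by
  have hslice : Summable fun y => c x y * (v x - v y) ^ 2 :=
    hv.comp_injective (Prod.mk_right_injective x)
  refine (((hdeg x).add hslice).div_const 2).of_norm_bounded fun y => ?_
  rw [Real.norm_eq_abs, abs_mul, abs_of_nonneg (hc x y)]
  nlinarith [hc x y, sq_nonneg (|v x - v y| - 1), sq_abs (v x - v y)]

lemma finiteEnergy_of_finite_support (hc : ∀ x y, 0 ≤ c x y) (hsymm : ∀ x y, c x y = c y x)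
    (hdeg : ∀ x, Summable (c x)) (hg : (Function.support g).Finite) : FiniteEnergy c g := by
  classical
  refine induction_on_finite_support ?_ (fun f g _ _ hf hg => ?_) (fun x a => ?_) hg
  · simp [FiniteEnergy]
  · rw [finiteEnergy_iff_memℓp hc, map_add]
    exact ((finiteEnergy_iff_memℓp hc).1 hf).add ((finiteEnergy_iff_memℓp hc).1 hg)
  · rw [finiteEnergy_iff_memℓp hc, ← mul_one a, ← smul_eq_mul, Pi.single_smul, map_smul]
    exact ((finiteEnergy_iff_memℓp hc).1 (finiteEnergy_single hsymm hdeg x)).const_smul a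

def finSuppGrad (c : V → V → ℝ) : Submodule ℝ (EdgeL2 V) where
  carrier := {G | ∃ g : V → ℝ, (Function.support g).Finite ∧ ⇑G = energyGrad c g}
  add_mem' := by
    rintro _ _ ⟨f, hf, hF⟩ ⟨g, hg, hG⟩
    exact ⟨f + g, (hf.union hg).subset (Function.support_add f g),
      by rw [lp.coeFn_add, hF, hG, map_add]⟩
  zero_mem' := ⟨0, by simp, by rw [lp.coeFn_zero, map_zero]⟩
  smul_mem' := by
    rintro a _ ⟨g, hg, hG⟩
    exact ⟨a • g, hg.subset (Function.support_const_smul_subset a g),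
      by rw [lp.coeFn_smul, hG, map_smul]⟩

lemma harmonic_iff_mem_orthogonal (hc : ∀ x y, 0 ≤ c x y) (hsymm : ∀ x y, c x y = c y x)
    (hdeg : ∀ x, Summable (c x)) {H : EdgeL2 V} (hH : ⇑H = energyGrad c h) :
    Harmonic c h ↔ H ∈ (finSuppGrad c).topologicalClosureᗮ := by
  classical
  rw [Submodule.orthogonal_closure]
  have hh := finiteEnergy_of_coe_eq hc hH
  constructor
  · rintro hharm G ⟨g, hg, hG⟩
    rw [← einner_eq_inner hc hG hH]
    refine induction_on_finite_support (motive := fun g => einner c g h = 0) ?_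
      (fun f g hf hg hf₀ hg₀ => ?_) (fun x a => ?_) hg
    · simp [einner]
    · rw [einner_add_left hc (finiteEnergy_of_finite_support hc hsymm hdeg hf)
        (finiteEnergy_of_finite_support hc hsymm hdeg hg) hh, hf₀, hg₀, add_zero]
    · have hx := (hharm x).1.hasSum
      rw [(hharm x).2] at hx
      rw [← mul_one a, ← smul_eq_mul, Pi.single_smul, einner_smul_left,
        einner_single_left hsymm hx, mul_zero]
  · intro hHK x
    have hlap := summable_laplacian hc hdeg hh x
    obtain ⟨D, hD⟩ := exists_coe_eq_energyGrad hc (finiteEnergy_single hsymm hdeg x)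
    have hDK : D ∈ finSuppGrad c :=
      ⟨_, (Set.finite_singleton x).subset Pi.support_single_subset, hD⟩
    refine ⟨hlap, ?_⟩
    rw [← einner_single_left hsymm hlap.hasSum, einner_eq_inner hc hD hH]
    exact Submodule.inner_right_of_mem_orthogonal hDK hHK

lemma memFinClosure_iff_mem_topologicalClosure (hc : ∀ x y, 0 ≤ c x y)
    (hsymm : ∀ x y, c x y = c y x) (hdeg : ∀ x, Summable (c x)) {F : EdgeL2 V}
    (hF : ⇑F = energyGrad c f) :
    MemFinClosure c f ↔ F ∈ (finSuppGrad c).topologicalClosure := by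
  have hsub : ∀ {g} {G : EdgeL2 V}, ⇑G = energyGrad c g →
      einner c (fun z => f z - g z) (fun z => f z - g z) = dist F G ^ 2 := by
    intro g G hG
    rw [dist_eq_norm]
    exact einner_self_eq_norm_sq hc (by rw [lp.coeFn_sub, hF, hG]; exact (map_sub _ _ _).symm)
  rw [← SetLike.mem_coe, Submodule.topologicalClosure_coe, Metric.mem_closure_iff]
  constructor
  · rintro ⟨-, happrox⟩ ε hε
    obtain ⟨g, hg, hlt⟩ := happrox (ε ^ 2) (by positivity)
    obtain ⟨G, hG⟩ :=
      exists_coe_eq_energyGrad hc (finiteEnergy_of_finite_support hc hsymm hdeg hg)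
    refine ⟨G, ⟨g, hg, hG⟩, lt_of_pow_lt_pow_left₀ 2 hε.le ?_⟩
    rwa [← hsub hG]
  · intro hclosure
    refine ⟨finiteEnergy_of_coe_eq hc hF, fun ε hε => ?_⟩
    obtain ⟨G, ⟨g, hg, hG⟩, hlt⟩ := hclosure (√ε) (Real.sqrt_pos.2 hε)
    exact ⟨g, hg, (hsub hG).trans_lt ((Real.lt_sqrt dist_nonneg).1 hlt)⟩

lemma exists_abs_sub_le_mul_norm {a b : V}
    (hab : Relation.ReflTransGen (fun s t => 0 < c s t) a b) :
    ∃ C : ℝ, ∀ (w : V → ℝ) (W : EdgeL2 V), ⇑W = energyGrad c w → |w a - w b| ≤ C * ‖W‖ := by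
  induction hab with
  | refl => exact ⟨0, fun w W _ => by simp⟩
  | @tail s t _ hst ih =>
    obtain ⟨C, hC⟩ := ih
    have hpos : 0 < √(c s t / 2) := Real.sqrt_pos.2 (half_pos hst)
    refine ⟨C + (√(c s t / 2))⁻¹, fun w W hW => ?_⟩
    have hedge : |w s - w t| ≤ (√(c s t / 2))⁻¹ * ‖W‖ := by
      have := lp.norm_apply_le_norm two_ne_zero W (s, t)
      rw [hW, energyGrad_apply, Real.norm_eq_abs, abs_mul, abs_of_pos hpos] at this
      rw [inv_mul_eq_div, le_div_iff₀ hpos]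
      linarith
    calc |w a - w t| ≤ |w a - w s| + |w s - w t| := abs_sub_le _ _ _
      _ ≤ C * ‖W‖ + (√(c s t / 2))⁻¹ * ‖W‖ := add_le_add (hC w W hW) hedge
      _ = (C + (√(c s t / 2))⁻¹) * ‖W‖ := by ring

lemma isClosed_setOf_coe_eq_energyGrad
    (hconn : ∀ x y : V, Relation.ReflTransGen (fun a b => 0 < c a b) x y) :
    IsClosed {G : EdgeL2 V | ∃ g : V → ℝ, ⇑G = energyGrad c g} := by
  refine isClosed_of_closure_subset fun G hG => ?_
  rcases isEmpty_or_nonempty V with _ | ⟨⟨o⟩⟩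
  · exact ⟨0, funext fun p => isEmptyElim p.1⟩
  obtain ⟨Gs, hGs, hlim⟩ := mem_closure_iff_seq_limit.1 hG
  choose g hg using hGs
  have hcauchy : ∀ x, CauchySeq fun n => g n x - g n o := by
    intro x
    obtain ⟨C, hC⟩ := exists_abs_sub_le_mul_norm (hconn x o)
    have hdist := (cauchySeq_iff_tendsto_dist_atTop_0.1 hlim.cauchySeq).const_mul C
    rw [mul_zero] at hdist
    refine cauchySeq_iff_tendsto_dist_atTop_0.2
      (squeeze_zero (fun _ => dist_nonneg) (fun n => ?_) hdist)
    have := hC (g n.1 - g n.2) (Gs n.1 - Gs n.2) (by rw [lp.coeFn_sub, hg, hg, map_sub])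
    rw [Real.dist_eq, dist_eq_norm]
    convert this using 2
    simp only [Pi.sub_apply]
    ring
  choose f hf using fun x => cauchySeq_tendsto_of_complete (hcauchy x)
  have hGp : ∀ p, Tendsto (fun n => Gs n p) atTop (𝓝 (G p)) :=
    tendsto_pi_nhds.1 ((lp.uniformContinuous_coe.continuous.tendsto G).comp hlim)
  refine ⟨f, funext fun p => tendsto_nhds_unique (hGp p) ?_⟩
  simp only [hg, energyGrad_apply]
  convert ((hf p.1).sub (hf p.2)).const_mul (√(c p.1 p.2 / 2)) using 2
  ring

lemma exists_coe_eq_energyGrad_of_mem_topologicalClosure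
    (hconn : ∀ x y : V, Relation.ReflTransGen (fun a b => 0 < c a b) x y) {F : EdgeL2 V}
    (hF : F ∈ (finSuppGrad c).topologicalClosure) : ∃ f : V → ℝ, ⇑F = energyGrad c f := by
  have hsub : (finSuppGrad c : Set (EdgeL2 V)) ⊆ {G | ∃ g : V → ℝ, ⇑G = energyGrad c g} := by
    rintro _ ⟨g, -, hG⟩
    exact ⟨g, hG⟩
  rw [← SetLike.mem_coe, Submodule.topologicalClosure_coe] at hF
  exact closure_minimal hsub (isClosed_setOf_coe_eq_energyGrad hconn) hF

lemma exists_const_of_energyGrad_eq_zero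
    (hconn : ∀ x y : V, Relation.ReflTransGen (fun a b => 0 < c a b) x y)
    (hw : energyGrad c w = 0) : ∃ k : ℝ, ∀ x, w x = k := by
  rcases isEmpty_or_nonempty V with _ | ⟨⟨o⟩⟩
  · exact ⟨0, fun x => isEmptyElim x⟩
  refine ⟨w o, fun x => ?_⟩
  obtain ⟨C, hC⟩ := exists_abs_sub_le_mul_norm (hconn x o)
  have := hC w 0 (by rw [lp.coeFn_zero, hw])
  rwa [norm_zero, mul_zero, abs_nonpos_iff, sub_eq_zero] at this


lemma einner_eq_zero_of_memFinClosure_of_harmonic (hc : ∀ x y, 0 ≤ c x y)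
    (hsymm : ∀ x y, c x y = c y x) (hdeg : ∀ x, Summable (c x)) (hf : MemFinClosure c f)
    (hh : FiniteEnergy c h) (hharm : Harmonic c h) : einner c f h = 0 := by
  obtain ⟨F, hF⟩ := exists_coe_eq_energyGrad hc hf.1
  obtain ⟨H, hH⟩ := exists_coe_eq_energyGrad hc hh
  rw [einner_eq_inner hc hF hH]
  exact Submodule.inner_right_of_mem_orthogonal
    ((memFinClosure_iff_mem_topologicalClosure hc hsymm hdeg hF).1 hf)
    ((harmonic_iff_mem_orthogonal hc hsymm hdeg hH).1 hharm)

lemma exists_memFinClosure_add_harmonic (hc : ∀ x y, 0 ≤ c x y) (hsymm : ∀ x y, c x y = c y x)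
    (hdeg : ∀ x, Summable (c x))
    (hconn : ∀ x y : V, Relation.ReflTransGen (fun a b => 0 < c a b) x y)
    (hu : FiniteEnergy c u) :
    ∃ f h : V → ℝ, MemFinClosure c f ∧ FiniteEnergy c h ∧ Harmonic c h ∧ u = f + h := by
  set K := (finSuppGrad c).topologicalClosure
  have : CompleteSpace K := (finSuppGrad c).isClosed_topologicalClosure.completeSpace_coe
  obtain ⟨U, hU⟩ := exists_coe_eq_energyGrad hc hu
  obtain ⟨F, hFK, H, hHK, rfl⟩ := K.exists_add_mem_mem_orthogonal U
  obtain ⟨f, hF⟩ := exists_coe_eq_energyGrad_of_mem_topologicalClosure hconn hFK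
  have hH : ⇑H = energyGrad c (u - f) := by
    rw [map_sub, ← hU, ← hF, lp.coeFn_add, add_sub_cancel_left]
  exact ⟨f, u - f, (memFinClosure_iff_mem_topologicalClosure hc hsymm hdeg hF).2 hFK,
    finiteEnergy_of_coe_eq hc hH, (harmonic_iff_mem_orthogonal hc hsymm hdeg hH).2 hHK,
    (add_sub_cancel _ _).symm⟩

lemma exists_eq_add_const_of_add_eq_add (hc : ∀ x y, 0 ≤ c x y) (hsymm : ∀ x y, c x y = c y x)
    (hdeg : ∀ x, Summable (c x))
    (hconn : ∀ x y : V, Relation.ReflTransGen (fun a b => 0 < c a b) x y) {f' h' : V → ℝ}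
    (hf : MemFinClosure c f) (hh : FiniteEnergy c h) (hharm : Harmonic c h)
    (hf' : MemFinClosure c f') (hh' : FiniteEnergy c h') (hharm' : Harmonic c h')
    (hsum : f + h = f' + h') : ∃ k : ℝ, ∀ x, f' x = f x + k := by
  set K := (finSuppGrad c).topologicalClosure
  obtain ⟨F, hF⟩ := exists_coe_eq_energyGrad hc hf.1
  obtain ⟨F', hF'⟩ := exists_coe_eq_energyGrad hc hf'.1
  obtain ⟨H, hH⟩ := exists_coe_eq_energyGrad hc hh
  obtain ⟨H', hH'⟩ := exists_coe_eq_energyGrad hc hh'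
  have hdiff : F' - F = H - H' := by
    ext1
    have hfh : f' - f = h - h' := by rw [sub_eq_sub_iff_add_eq_add, ← hsum, add_comm]
    rw [lp.coeFn_sub, lp.coeFn_sub, hF, hF', hH, hH', ← map_sub, ← map_sub, hfh]
  have hzero : F' - F = 0 := by
    rw [← Submodule.mem_bot ℝ, ← K.inf_orthogonal_eq_bot]
    refine ⟨K.sub_mem ((memFinClosure_iff_mem_topologicalClosure hc hsymm hdeg hF').1 hf')
      ((memFinClosure_iff_mem_topologicalClosure hc hsymm hdeg hF).1 hf), hdiff ▸ ?_⟩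
    exact Kᗮ.sub_mem ((harmonic_iff_mem_orthogonal hc hsymm hdeg hH).1 hharm)
      ((harmonic_iff_mem_orthogonal hc hsymm hdeg hH').1 hharm')
  obtain ⟨k, hk⟩ := exists_const_of_energyGrad_eq_zero hconn (w := f' - f)
    (by rw [map_sub, ← hF, ← hF', ← lp.coeFn_sub, hzero, lp.coeFn_zero])
  exact ⟨k, fun x => eq_add_of_sub_eq' (hk x)⟩

end ResistanceNetwork

open ResistanceNetwork

theorem royden_decomposition_general {V : Type*}
    (c : V → V → ℝ)
    (hsymm : ∀ x y, c x y = c y x)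
    (hnonneg : ∀ x y, 0 ≤ c x y)
    (hdeg : ∀ x, Summable (fun y => c x y))
    (hconn : ∀ x y : V, Relation.ReflTransGen (fun a b => 0 < c a b) x y)
    (u : V → ℝ) (hu : FiniteEnergy c u) :
    (∃ f h : V → ℝ, MemFinClosure c f ∧ FiniteEnergy c h ∧ Harmonic c h ∧
        ∀ x, u x = f x + h x) ∧
    (∀ f h : V → ℝ, MemFinClosure c f → FiniteEnergy c h → Harmonic c h →
        einner c f h = 0) ∧
    (∀ f h f' h' : V → ℝ,
        MemFinClosure c f → FiniteEnergy c h → Harmonic c h → (∀ x, u x = f x + h x) →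
        MemFinClosure c f' → FiniteEnergy c h' → Harmonic c h' → (∀ x, u x = f' x + h' x) →
        ∃ k : ℝ, ∀ x, f' x = f x + k) := by
  refine ⟨?_, fun f h hf hh hharm => ?_, fun f h f' h' hf hh hharm hfh hf' hh' hharm' hfh' => ?_⟩
  · obtain ⟨f, h, hf, hh, hharm, rfl⟩ :=
      exists_memFinClosure_add_harmonic hnonneg hsymm hdeg hconn hu
    exact ⟨f, h, hf, hh, hharm, fun x => rfl⟩
  · exact einner_eq_zero_of_memFinClosure_of_harmonic hnonneg hsymm hdeg hf hh hharm
  · exact exists_eq_add_const_of_add_eq_add hnonneg hsymm hdeg hconn hf hh hharm hf' hh' hharm'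
      (funext fun x => (hfh x).symm.trans (hfh' x))

/-- Royden decomposition `H_E = Fin ⊕ Harm`: every finite-energy
function is, uniquely up to an additive constant, the sum of an element of the
energy-closure of the finitely supported functions and a finite-energy harmonic
function, and these two subspaces are orthogonal in the energy inner product. -/
theorem royden_decomposition {V : Type*}
    (c : V → V → ℝ)
    (hsymm : ∀ x y, c x y = c y x)
    (hnonneg : ∀ x y, 0 ≤ c x y)
    (hloop : ∀ x, c x x = 0)
    (hdeg : ∀ x, Summable (fun y => c x y))
    (hconn : ∀ x y : V, Relation.ReflTransGen (fun a b => 0 < c a b) x y)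
    (u : V → ℝ) (hu : FiniteEnergy c u) :
    (∃ f h : V → ℝ, MemFinClosure c f ∧ FiniteEnergy c h ∧ Harmonic c h ∧
        ∀ x, u x = f x + h x) ∧
    (∀ f h : V → ℝ, MemFinClosure c f → FiniteEnergy c h → Harmonic c h →
        einner c f h = 0) ∧
    (∀ f h f' h' : V → ℝ,
        MemFinClosure c f → FiniteEnergy c h → Harmonic c h → (∀ x, u x = f x + h x) →
        MemFinClosure c f' → FiniteEnergy c h' → Harmonic c h' → (∀ x, u x = f' x + h' x) →
        ∃ k : ℝ, ∀ x, f' x = f x + k) :=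
  royden_decomposition_general c hsymm hnonneg hdeg hconn u hu
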